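/- Let r ≥ 1 and let p₁,…,p_r ∈ [0,1] with p_r = 1, and define q_i := p_i·∏_{j<i}(1−p_j). Then Σ_{i=1}^{r} q_i·( Σ_{j=1}^{i} p_j ) = 1. More generally, for arbitrary p_r ∈ [0,1], Σ_{i=1}^{r} q_i·( Σ_{j=1}^{i} p_j ) = 1 − ( ∏_{i=1}^{r} (1−p_i) )·( 1 + Σ_{i=1}^{r} p_i ). -/

import Mathlib

open Finset

/- Induction on `r`: with `P = ∏_{i≤r} (1 - p_i)` and `S = Σ_{i≤r} p_i`, the new term
`p_{r+1} P (S + p_{r+1})` is exactly `P (1 + S) - (1 - p_{r+1}) P (1 + S + p_{r+1})`. -/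
theorem sum_Icc_mul_prod_one_sub_mul_sum_Icc {R : Type*} [CommRing R] (p : ℕ → R) (r : ℕ) :
    ∑ i ∈ Icc 1 r, (p i * ∏ j ∈ Icc 1 (i - 1), (1 - p j)) * (∑ j ∈ Icc 1 i, p j)
      = 1 - (∏ i ∈ Icc 1 r, (1 - p i)) * (1 + ∑ i ∈ Icc 1 r, p i) := by
  induction r with
  | zero => simp
  | succ n ih =>
    rw [sum_Icc_succ_top (by omega), ih, prod_Icc_succ_top (by omega),
      sum_Icc_succ_top (by omega), Nat.add_sub_cancel]
    ring

theorem first_success_weighted_sum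
    (r : ℕ) (hr : 1 ≤ r) (p : ℕ → ℝ) :
    (p r = 1 →
      ∑ i ∈ Finset.Icc 1 r,
        (p i * ∏ j ∈ Finset.Icc 1 (i - 1), (1 - p j)) * (∑ j ∈ Finset.Icc 1 i, p j)
        = 1) ∧
    ∑ i ∈ Finset.Icc 1 r,
        (p i * ∏ j ∈ Finset.Icc 1 (i - 1), (1 - p j)) * (∑ j ∈ Finset.Icc 1 i, p j)
      = 1 - (∏ i ∈ Finset.Icc 1 r, (1 - p i)) * (1 + ∑ i ∈ Finset.Icc 1 r, p i) := by
  refine ⟨fun hpr => ?_, sum_Icc_mul_prod_one_sub_mul_sum_Icc p r⟩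
  have hprod : ∏ i ∈ Icc 1 r, (1 - p i) = 0 :=
    prod_eq_zero (right_mem_Icc.mpr hr) (by rw [hpr, sub_self])
  rw [sum_Icc_mul_prod_one_sub_mul_sum_Icc, hprod, zero_mul, sub_zero]
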